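/- arXiv:0803.1094 — 5 statements merged into one kernel-verified Lean document; each statement's English description precedes it below -/
import Mathlib

section
/- Let F be a finite field with q elements, h, h', h'' ∈ F nonzero, and f', f'' : F → ℝ. Suppose Δ', Δ'' ⊆ F satisfy card(Δ') + card(Δ'') ≥ q + 1, and suppose that every value of f' or f'' taken outside the selected sets dominates every value taken inside them; that is: for all b' ∉ Δ', f'(b') ≥ f'(a') for every a' ∈ Δ' and f'(b') ≥ f''(a'') for every a'' ∈ Δ'', and symmetrically, for all b'' ∉ Δ'', f''(b'') ≥ f'(a') for every a' ∈ Δ' and f''(b'') ≥ f''(a'') for every a'' ∈ Δ''. Then for every a ∈ F, min over all pairs (a', a'') ∈ F × F with h'·a' + h''·a'' = h·a of max(f'(a'), f''(a'')) equals the min over pairs (a', a'') ∈ Δ' × Δ'' with h'·a' + h''·a'' = h·a of max(f'(a'), f''(a'')). (Both minimizing sets are nonempty.) -/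
open Finset

/-- **Corollary (selective implementation of the min-max computation).**
Let `F` be a finite field with `q` elements, `h, h', h''` nonzero, and
`f', f'' : F → ℝ`. If `Δ', Δ'' ⊆ F` satisfy `card Δ' + card Δ'' ≥ q + 1` and every
value of `f'` (resp. `f''`) taken outside `Δ'` (resp. `Δ''`) dominates every value of
`f'` on `Δ'` and of `f''` on `Δ''`, then for every `a ∈ F` the min-max
`f(a) = min_{h'a' + h''a'' = ha} max (f' a') (f'' a'')` can be computed using only
symbols `a' ∈ Δ'` and `a'' ∈ Δ''`. -/
theorem minmax_selective_computation {F : Type*} [Field F] [Fintype F]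
    (h h' h'' : F) (hh : h ≠ 0) (hh' : h' ≠ 0) (hh'' : h'' ≠ 0)
    (f' f'' : F → ℝ) (Δ' Δ'' : Finset F)
    (hcard : Fintype.card F + 1 ≤ Δ'.card + Δ''.card)
    (hdom' : ∀ b' ∉ Δ', (∀ a' ∈ Δ', f' a' ≤ f' b') ∧ (∀ a'' ∈ Δ'', f'' a'' ≤ f' b'))
    (hdom'' : ∀ b'' ∉ Δ'', (∀ a' ∈ Δ', f' a' ≤ f'' b'') ∧ (∀ a'' ∈ Δ'', f'' a'' ≤ f'' b'')) :
    ∀ a : F,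
      sInf {x : ℝ | ∃ a' a'' : F, h' * a' + h'' * a'' = h * a ∧ x = max (f' a') (f'' a'')}
        = sInf {x : ℝ | ∃ a' ∈ Δ', ∃ a'' ∈ Δ'',
            h' * a' + h'' * a'' = h * a ∧ x = max (f' a') (f'' a'')} := by
  classical
  intro a
  set A : Set ℝ := {x : ℝ | ∃ a' a'' : F, h' * a' + h'' * a'' = h * a ∧ x = max (f' a') (f'' a'')} with hA
  set B : Set ℝ := {x : ℝ | ∃ a' ∈ Δ', ∃ a'' ∈ Δ'',
            h' * a' + h'' * a'' = h * a ∧ x = max (f' a') (f'' a'')} with hB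
  have hBA : B ⊆ A := by
    rintro x ⟨a', _, a'', _, hc, hx⟩
    exact ⟨a', a'', hc, hx⟩
  have hAfin : A.Finite := by
    have : A ⊆ (fun p : F × F => max (f' p.1) (f'' p.2)) '' Set.univ := by
      rintro x ⟨a', a'', _, hx⟩
      exact ⟨(a', a''), Set.mem_univ _, hx.symm⟩
    exact Set.Finite.subset ((Set.finite_univ).image _) this
  have hBfin : B.Finite := hAfin.subset hBA
  -- find a pair in Δ' × Δ''
  have hg : Function.Injective (fun a'' : F => (h * a - h'' * a'') / h') := by
    intro x y hxy
    field_simp at hxy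
    exact mul_left_cancel₀ hh'' (by linear_combination -hxy)
  set T := Δ''.image (fun a'' : F => (h * a - h'' * a'') / h') with hTdef
  have hT : T.card = Δ''.card := Finset.card_image_of_injective _ hg
  have hinter : (Δ' ∩ T).Nonempty := by
    rw [← Finset.card_pos]
    have h1 : (Δ' ∪ T).card + (Δ' ∩ T).card = Δ'.card + T.card :=
      Finset.card_union_add_card_inter _ _
    have h2 : (Δ' ∪ T).card ≤ Fintype.card F := Finset.card_le_card (Finset.subset_univ _) |>.trans_eq (Finset.card_univ)
    omega
  obtain ⟨a₀', ha₀'⟩ := hinter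
  have ha₀'Δ : a₀' ∈ Δ' := (Finset.mem_inter.mp ha₀').1
  obtain ⟨a₀'', ha₀''Δ, ha₀''⟩ := Finset.mem_image.mp (Finset.mem_inter.mp ha₀').2
  have hconstr : h' * a₀' + h'' * a₀'' = h * a := by
    rw [← ha₀'']
    field_simp
    ring
  set M : ℝ := max (f' a₀') (f'' a₀'') with hM
  have hMB : M ∈ B := ⟨a₀', ha₀'Δ, a₀'', ha₀''Δ, hconstr, rfl⟩
  have hBne : B.Nonempty := ⟨M, hMB⟩
  have hAne : A.Nonempty := ⟨M, hBA hMB⟩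
  apply le_antisymm
  · exact csInf_le_csInf hAfin.bddBelow hBne hBA
  · apply le_csInf hAne
    rintro x ⟨a', a'', hc, hx⟩
    by_cases h1 : a' ∈ Δ'
    · by_cases h2 : a'' ∈ Δ''
      · exact csInf_le hBfin.bddBelow ⟨a', h1, a'', h2, hc, hx⟩
      · have hd := hdom'' a'' h2
        have hMle : M ≤ f'' a'' := max_le (hd.1 _ ha₀'Δ) (hd.2 _ ha₀''Δ)
        calc sInf B ≤ M := csInf_le hBfin.bddBelow hMB
          _ ≤ f'' a'' := hMle
          _ ≤ x := hx ▸ le_max_right _ _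
    · have hd := hdom' a' h1
      have hMle : M ≤ f' a' := max_le (hd.1 _ ha₀'Δ) (hd.2 _ ha₀''Δ)
      calc sInf B ≤ M := csInf_le hBfin.bddBelow hMB
        _ ≤ f' a' := hMle
        _ ≤ x := hx ▸ le_max_left _ _
end

section
/- Let F be a finite field with q elements, h, h', h'' ∈ F nonzero, and f', f'' : F → ℝ nonnegative functions. For a natural number t, set Δ' = {a' ∈ F : ⌊f'(a')⌋ ≤ t} and Δ'' = {a'' ∈ F : ⌊f''(a'')⌋ ≤ t}. If card(Δ') + card(Δ'') ≥ q + 1, then for every a ∈ F, min over all pairs (a', a'') ∈ F × F with h'·a' + h''·a'' = h·a of max(f'(a'), f''(a'')) equals the min over pairs (a', a'') ∈ Δ' × Δ'' with h'·a' + h''·a'' = h·a of max(f'(a'), f''(a'')). -/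
open Finset

/-- **Selective implementation via integer parts.** Let `F` be a finite field with `q`
elements, `h, h', h''` nonzero, and `f', f'' : F → ℝ` nonnegative. For a natural number
`t`, let `Δ' = {a' | ⌊f' a'⌋ ≤ t}` and `Δ'' = {a'' | ⌊f'' a''⌋ ≤ t}`. If
`card Δ' + card Δ'' ≥ q + 1`, then the min-max computation
`f(a) = min_{h'a' + h''a'' = ha} max (f' a') (f'' a'')` can be restricted to
`a' ∈ Δ'`, `a'' ∈ Δ''`. -/
theorem minmax_selective_floor_computation {F : Type*} [Field F] [Fintype F]
    (h h' h'' : F) (hh : h ≠ 0) (hh' : h' ≠ 0) (hh'' : h'' ≠ 0)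
    (f' f'' : F → ℝ) (hf' : ∀ a, 0 ≤ f' a) (hf'' : ∀ a, 0 ≤ f'' a) (t : ℕ)
    (hcard : Fintype.card F + 1 ≤
      (Finset.univ.filter fun a' : F => ⌊f' a'⌋ ≤ (t : ℤ)).card +
      (Finset.univ.filter fun a'' : F => ⌊f'' a''⌋ ≤ (t : ℤ)).card) :
    ∀ a : F,
      sInf {x : ℝ | ∃ a' a'' : F, h' * a' + h'' * a'' = h * a ∧ x = max (f' a') (f'' a'')}
        = sInf {x : ℝ | ∃ a' a'' : F, ⌊f' a'⌋ ≤ (t : ℤ) ∧ ⌊f'' a''⌋ ≤ (t : ℤ) ∧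
            h' * a' + h'' * a'' = h * a ∧ x = max (f' a') (f'' a'')} := by
  classical
  intro a
  set A : Set ℝ := {x : ℝ | ∃ a' a'' : F, h' * a' + h'' * a'' = h * a ∧
    x = max (f' a') (f'' a'')} with hA
  set B : Set ℝ := {x : ℝ | ∃ a' a'' : F, ⌊f' a'⌋ ≤ (t : ℤ) ∧ ⌊f'' a''⌋ ≤ (t : ℤ) ∧
    h' * a' + h'' * a'' = h * a ∧ x = max (f' a') (f'' a'')} with hB
  -- the map φ sending a' to the unique a'' with h'a' + h''a'' = ha
  set φ : F → F := fun a' => (h * a - h' * a') * h''⁻¹ with hφ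
  have hφeq : ∀ a', h' * a' + h'' * φ a' = h * a := by
    intro a'
    simp only [hφ]
    rw [mul_comm (h * a - h' * a'), ← mul_assoc, mul_inv_cancel₀ hh'', one_mul]
    ring
  have hφinj : Function.Injective φ := by
    intro x y hxy
    have : h' * x = h' * y := by
      have := mul_right_cancel₀ (inv_ne_zero hh'') hxy
      linear_combination -this
    exact mul_left_cancel₀ hh' this
  -- card of the φ-pulled-back filter equals card of the a''-filter
  have hcard2 : (Finset.univ.filter fun a' : F => ⌊f'' (φ a')⌋ ≤ (t : ℤ)).card
      = (Finset.univ.filter fun a'' : F => ⌊f'' a''⌋ ≤ (t : ℤ)).card := by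
    have hφsurj : Function.Surjective φ := Finite.surjective_of_injective hφinj
    apply Finset.card_bij (fun a' _ => φ a')
    · intro x hx
      simp only [Finset.mem_filter, Finset.mem_univ, true_and] at hx ⊢
      exact hx
    · intro x hx y hy hxy
      exact hφinj hxy
    · intro b hb
      obtain ⟨x, hx⟩ := hφsurj b
      refine ⟨x, ?_, hx⟩
      simp only [Finset.mem_filter, Finset.mem_univ, true_and] at hb ⊢
      rw [hx]; exact hb
  -- pigeonhole: the two filters on a' intersect
  have hinter : ((Finset.univ.filter fun a' : F => ⌊f' a'⌋ ≤ (t : ℤ)) ∩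
      (Finset.univ.filter fun a' : F => ⌊f'' (φ a')⌋ ≤ (t : ℤ))).Nonempty := by
    rw [← Finset.card_pos]
    by_contra hcon
    push_neg at hcon
    have h0 : ((Finset.univ.filter fun a' : F => ⌊f' a'⌋ ≤ (t : ℤ)) ∩
        (Finset.univ.filter fun a' : F => ⌊f'' (φ a')⌋ ≤ (t : ℤ))).card = 0 := by omega
    have := Finset.card_union_add_card_inter
      (Finset.univ.filter fun a' : F => ⌊f' a'⌋ ≤ (t : ℤ))
      (Finset.univ.filter fun a' : F => ⌊f'' (φ a')⌋ ≤ (t : ℤ))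
    have hle : ((Finset.univ.filter fun a' : F => ⌊f' a'⌋ ≤ (t : ℤ)) ∪
        (Finset.univ.filter fun a' : F => ⌊f'' (φ a')⌋ ≤ (t : ℤ))).card ≤ Fintype.card F :=
      Finset.card_le_univ _
    omega
  obtain ⟨b', hb'⟩ := hinter
  simp only [Finset.mem_inter, Finset.mem_filter, Finset.mem_univ, true_and] at hb'
  -- witness element of B
  have hyB : max (f' b') (f'' (φ b')) ∈ B := ⟨b', φ b', hb'.1, hb'.2, hφeq b', rfl⟩
  have hBne : B.Nonempty := ⟨_, hyB⟩
  have hBA : B ⊆ A := by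
    rintro x ⟨a', a'', _, _, hsum, hx⟩
    exact ⟨a', a'', hsum, hx⟩
  have hAfin : A.Finite := by
    apply Set.Finite.subset (Set.finite_range fun p : F × F => max (f' p.1) (f'' p.2))
    rintro x ⟨a', a'', _, hx⟩
    exact ⟨(a', a''), hx.symm⟩
  have hAbdd : BddBelow A := hAfin.bddBelow
  have hAne : A.Nonempty := hBne.mono hBA
  -- witness is < t + 1
  have hylt : max (f' b') (f'' (φ b')) < (t : ℝ) + 1 := by
    have h1 : f' b' < (t : ℝ) + 1 :=
      lt_of_lt_of_le (Int.lt_floor_add_one _) (by exact_mod_cast Int.add_le_add_right hb'.1 1)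
    have h2 : f'' (φ b') < (t : ℝ) + 1 :=
      lt_of_lt_of_le (Int.lt_floor_add_one _) (by exact_mod_cast Int.add_le_add_right hb'.2 1)
    exact max_lt h1 h2
  apply le_antisymm
  · exact csInf_le_csInf hAbdd hBne hBA
  · -- sInf B ≤ sInf A
    have hmem : sInf A ∈ A := hAne.csInf_mem hAfin
    obtain ⟨a', a'', hsum, hx⟩ := hmem
    by_cases hc1 : ⌊f' a'⌋ ≤ (t : ℤ)
    · by_cases hc2 : ⌊f'' a''⌋ ≤ (t : ℤ)
      · exact csInf_le (hAfin.subset hBA).bddBelow ⟨a', a'', hc1, hc2, hsum, hx⟩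
      · -- f'' a'' ≥ t + 1, so sInf A ≥ t+1 > witness
        have : (t : ℝ) + 1 ≤ f'' a'' := by
          have : (t : ℤ) + 1 ≤ ⌊f'' a''⌋ := by omega
          calc (t : ℝ) + 1 = ((t : ℤ) + 1 : ℤ) := by push_cast; ring
            _ ≤ (⌊f'' a''⌋ : ℝ) := by exact_mod_cast this
            _ ≤ f'' a'' := Int.floor_le _
        have hge : (t : ℝ) + 1 ≤ sInf A := hx ▸ le_trans this (le_max_right _ _)
        calc sInf B ≤ max (f' b') (f'' (φ b')) :=
              csInf_le (hAfin.subset hBA).bddBelow hyB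
          _ ≤ sInf A := le_trans hylt.le hge
    · have : (t : ℝ) + 1 ≤ f' a' := by
        have : (t : ℤ) + 1 ≤ ⌊f' a'⌋ := by omega
        calc (t : ℝ) + 1 = ((t : ℤ) + 1 : ℤ) := by push_cast; ring
          _ ≤ (⌊f' a'⌋ : ℝ) := by exact_mod_cast this
          _ ≤ f' a' := Int.floor_le _
      have hge : (t : ℝ) + 1 ≤ sInf A := hx ▸ le_trans this (le_max_left _ _)
      calc sInf B ≤ max (f' b') (f'' (φ b')) :=
            csInf_le (hAfin.subset hBA).bddBelow hyB
        _ ≤ sInf A := le_trans hylt.le hge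
end

section
/- Let d ≥ 1 and let α_1, …, α_d : ZMod 2 → ℝ be nonnegative functions such that each α_j attains the value 0 (i.e., for each j there exists s_j ∈ ZMod 2 with α_j(s_j) = 0). Fix c ∈ ZMod 2 and let (ā_1, …, ā_d) be any tuple with ā_1 + ⋯ + ā_d = c minimizing the sum Σ_j α_j(a_j) over all tuples (a_1, …, a_d) ∈ (ZMod 2)^d with a_1 + ⋯ + a_d = c. Then there is at most one index j with α_j(ā_j) > 0. -/
/-- Over `GF(2)`, if `(ā_1, …, ā_d)` minimizes `∑_j α_j (a_j)` among all tuples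
satisfying the parity-check constraint `a_1 + ⋯ + a_d = c`, where the incoming messages
`α_j` are nonnegative and each attains the value `0`, then at most one index `j`
satisfies `α_j (ā_j) > 0`. -/
theorem minsum_gf2_minimizer_at_most_one_positive
    (d : ℕ) (hd : 1 ≤ d) (α : Fin d → ZMod 2 → ℝ)
    (hα : ∀ j a, 0 ≤ α j a) (hzero : ∀ j, ∃ s, α j s = 0)
    (c : ZMod 2) (abar : Fin d → ZMod 2)
    (hconstraint : ∑ j, abar j = c)
    (hmin : ∀ a : Fin d → ZMod 2, (∑ j, a j = c) → ∑ j, α j (abar j) ≤ ∑ j, α j (a j)) :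
    ∀ j k : Fin d, 0 < α j (abar j) → 0 < α k (abar k) → j = k := by
  intro j k hj hk
  by_contra hjk
  obtain ⟨sj, hsj⟩ := hzero j
  obtain ⟨sk, hsk⟩ := hzero k
  have key : ∀ x y : ZMod 2, x ≠ y → x = y + 1 := by decide
  have hsj' : sj = abar j + 1 :=
    key _ _ (fun h => by rw [h] at hsj; linarith)
  have hsk' : sk = abar k + 1 :=
    key _ _ (fun h => by rw [h] at hsk; linarith)
  set a : Fin d → ZMod 2 := Function.update (Function.update abar j sj) k sk with ha
  have hjmem : j ∈ Finset.univ.erase k := Finset.mem_erase.mpr ⟨hjk, Finset.mem_univ j⟩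
  -- sums over the flipped tuple split off the two updated coordinates
  have split : ∀ (β : Fin d → ZMod 2 → ℝ),
      ∑ i, β i (a i) = β k sk + (β j sj + ∑ i ∈ (Finset.univ.erase k).erase j, β i (abar i)) ∧
      ∑ i, β i (abar i) = β k (abar k) + (β j (abar j) + ∑ i ∈ (Finset.univ.erase k).erase j, β i (abar i)) := by
    intro β
    constructor
    · rw [ha]
      rw [show (∑ i, β i (Function.update (Function.update abar j sj) k sk i)) =
          β k sk + ∑ i ∈ Finset.univ.erase k, β i (Function.update abar j sj i) from ?_]
      · congr 1
        rw [show (∑ i ∈ Finset.univ.erase k, β i (Function.update abar j sj i)) =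
            β j sj + ∑ i ∈ (Finset.univ.erase k).erase j, β i (abar i) from ?_]
        rw [← Finset.add_sum_erase _ _ hjmem, Function.update_self]
        congr 1
        apply Finset.sum_congr rfl
        intro i hi
        rw [Function.update_of_ne (Finset.mem_erase.mp hi).1]
      · rw [← Finset.add_sum_erase _ _ (Finset.mem_univ k), Function.update_self]
        congr 1
        apply Finset.sum_congr rfl
        intro i hi
        rw [Function.update_of_ne (Finset.mem_erase.mp hi).1]
    · rw [← Finset.add_sum_erase _ _ (Finset.mem_univ k),
        ← Finset.add_sum_erase _ (fun i => β i (abar i)) hjmem]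
  have splitZ : ∀ (β : Fin d → ZMod 2 → ZMod 2),
      ∑ i, β i (a i) = β k sk + (β j sj + ∑ i ∈ (Finset.univ.erase k).erase j, β i (abar i)) ∧
      ∑ i, β i (abar i) = β k (abar k) + (β j (abar j) + ∑ i ∈ (Finset.univ.erase k).erase j, β i (abar i)) := by
    intro β
    constructor
    · rw [ha]
      rw [show (∑ i, β i (Function.update (Function.update abar j sj) k sk i)) =
          β k sk + ∑ i ∈ Finset.univ.erase k, β i (Function.update abar j sj i) from ?_]
      · congr 1
        rw [show (∑ i ∈ Finset.univ.erase k, β i (Function.update abar j sj i)) =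
            β j sj + ∑ i ∈ (Finset.univ.erase k).erase j, β i (abar i) from ?_]
        rw [← Finset.add_sum_erase _ _ hjmem, Function.update_self]
        congr 1
        apply Finset.sum_congr rfl
        intro i hi
        rw [Function.update_of_ne (Finset.mem_erase.mp hi).1]
      · rw [← Finset.add_sum_erase _ _ (Finset.mem_univ k), Function.update_self]
        congr 1
        apply Finset.sum_congr rfl
        intro i hi
        rw [Function.update_of_ne (Finset.mem_erase.mp hi).1]
    · rw [← Finset.add_sum_erase _ _ (Finset.mem_univ k),
        ← Finset.add_sum_erase _ (fun i => β i (abar i)) hjmem]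
  obtain ⟨hc1, hc2⟩ := splitZ (fun _ x => x)
  have hsum : ∑ i, a i = c := by
    rw [hc1, hsj', hsk', ← hconstraint, hc2]
    ring_nf
    rw [show (2 : ZMod 2) = 0 by decide]
    ring
  obtain ⟨hv1, hv2⟩ := split α
  have := hmin a hsum
  rw [hv1, hv2, hsj, hsk] at this
  linarith
end

section
/- Let d ≥ 1 and let α_1, …, α_d : ZMod 2 → ℝ be nonnegative functions such that each α_j attains the value 0. Then for every c ∈ ZMod 2, the minimum over all tuples (a_1, …, a_d) ∈ (ZMod 2)^d with a_1 + ⋯ + a_d = c of the sum Σ_j α_j(a_j) equals the minimum over the same set of tuples of max_j α_j(a_j). -/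
/-- Over `GF(2)`, the Min-Sum⋆ and Min-Max check-node computations coincide: for
nonnegative incoming messages `α_j` each attaining the value `0`, the minimum of
`∑_j α_j (a_j)` over all tuples with `a_1 + ⋯ + a_d = c` equals the minimum of
`max_j α_j (a_j)` over the same set of tuples. -/
theorem minsum_eq_minmax_gf2
    (d : ℕ) (hd : 1 ≤ d) (α : Fin d → ZMod 2 → ℝ)
    (hα : ∀ j a, 0 ≤ α j a) (hzero : ∀ j, ∃ s, α j s = 0) :
    ∀ c : ZMod 2,
      sInf {x : ℝ | ∃ a : Fin d → ZMod 2, (∑ j, a j = c) ∧ x = ∑ j, α j (a j)}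
        = sInf {x : ℝ | ∃ a : Fin d → ZMod 2, (∑ j, a j = c) ∧ x = ⨆ j, α j (a j)} := by
  intro c
  haveI : Nonempty (Fin d) := ⟨⟨0, hd⟩⟩
  classical
  set A := {x : ℝ | ∃ a : Fin d → ZMod 2, (∑ j, a j = c) ∧ x = ∑ j, α j (a j)} with hA
  set B := {x : ℝ | ∃ a : Fin d → ZMod 2, (∑ j, a j = c) ∧ x = ⨆ j, α j (a j)} with hB
  choose s hs using hzero
  -- a witness tuple summing to c
  have hwit : ∑ j, Pi.single (⟨0, hd⟩ : Fin d) c j = c := by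
    simp [Finset.sum_pi_single']
  have hAne : A.Nonempty := ⟨_, _, hwit, rfl⟩
  have hBne : B.Nonempty := ⟨_, _, hwit, rfl⟩
  have hAbd : BddBelow A := by
    refine ⟨0, fun x hx => ?_⟩
    obtain ⟨a, -, rfl⟩ := hx
    exact Finset.sum_nonneg fun j _ => hα j (a j)
  have hBbd : BddBelow B := by
    refine ⟨0, fun x hx => ?_⟩
    obtain ⟨a, -, rfl⟩ := hx
    exact le_trans (hα ⟨0, hd⟩ _)
      (le_ciSup (f := fun j => α j (a j)) (Set.Finite.bddAbove (Set.finite_range _)) _)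
  apply le_antisymm
  · -- sInf A ≤ sInf B : for each max element, build a sum element ≤ it
    refine le_csInf hBne fun b hb => ?_
    obtain ⟨a, hac, rfl⟩ := hb
    by_cases hsc : ∑ j, s j = c
    · have h0 : (0 : ℝ) ∈ A := by
        refine ⟨s, hsc, ?_⟩
        simp [hs]
      refine le_trans (csInf_le hAbd h0) ?_
      exact le_trans (hα ⟨0, hd⟩ _)
        (le_ciSup (f := fun j => α j (a j)) (Set.Finite.bddAbove (Set.finite_range _)) _)
    · -- a differs from s somewhere
      have hne : a ≠ s := fun h => hsc (h ▸ hac)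
      obtain ⟨j0, hj0⟩ := Function.ne_iff.mp hne
      have haj0 : a j0 = s j0 + 1 := by
        revert hj0; generalize a j0 = u; generalize s j0 = v; revert u v; decide
      set a' := Function.update s j0 (a j0) with ha'
      have hsum' : ∑ j, a' j = c := by
        have h1 : ∑ j, a' j = a j0 + ∑ j ∈ Finset.univ \ {j0}, s j :=
          Finset.sum_update_of_mem (Finset.mem_univ j0) s (a j0)
        have h2 : s j0 + ∑ j ∈ Finset.univ \ {j0}, s j = ∑ j, s j := by
          rw [Finset.sdiff_singleton_eq_erase, Finset.add_sum_erase _ _ (Finset.mem_univ j0)]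
        have hkey : ∀ u v : ZMod 2, u ≠ v → u = v + 1 := by decide
        have hsc' : ∑ j, s j = c + 1 := hkey _ _ hsc
        have h3 := h2
        rw [hsc'] at h3
        have h11 : (1 + 1 : ZMod 2) = 0 := by decide
        calc ∑ j, a' j = (s j0 + ∑ j ∈ Finset.univ \ {j0}, s j) + 1 := by
              rw [h1, haj0]; ring
          _ = c := by rw [h3, add_assoc, h11, add_zero]
      have hval : ∑ j, α j (a' j) ≤ α j0 (a j0) := by
        have : ∑ j, α j (a' j) = α j0 (a j0) + ∑ j ∈ Finset.univ \ {j0}, α j (s j) := by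
          rw [ha']
          rw [show (fun j => α j (Function.update s j0 (a j0) j)) =
              Function.update (fun j => α j (s j)) j0 (α j0 (a j0)) from ?_]
          · exact Finset.sum_update_of_mem (Finset.mem_univ j0) (fun j => α j (s j)) _
          · funext j
            by_cases h : j = j0 <;> simp [h, Function.update]
        rw [this, Finset.sum_eq_zero fun j _ => hs j, add_zero]
      refine le_trans (csInf_le hAbd ⟨a', hsum', rfl⟩) (le_trans hval ?_)
      exact le_ciSup (f := fun j => α j (a j)) (Set.Finite.bddAbove (Set.finite_range _)) j0
  · -- sInf B ≤ sInf A : max ≤ sum pointwise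
    refine le_csInf hAne fun x hx => ?_
    obtain ⟨a, hac, rfl⟩ := hx
    refine le_trans (csInf_le hBbd ⟨a, hac, rfl⟩) ?_
    exact ciSup_le fun j =>
      Finset.single_le_sum (fun i _ => hα i (a i)) (Finset.mem_univ j)
end

section
/- Let d ≥ 1, let p ≥ 1 be a real number, and let α_1, …, α_d : ZMod 2 → ℝ be nonnegative functions such that each α_j attains the value 0. Then for every c ∈ ZMod 2, the minimum over all tuples (a_1, …, a_d) ∈ (ZMod 2)^d with a_1 + ⋯ + a_d = c of (Σ_j α_j(a_j)^p)^{1/p} equals the minimum over the same set of tuples of Σ_j α_j(a_j). -/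
/-- Over `GF(2)`, the `p`-norm check-node computation coincides with the Min-Sum⋆ one:
for `p ≥ 1` and nonnegative incoming messages `α_j` each attaining the value `0`, the
minimum of `(∑_j α_j(a_j)^p)^(1/p)` over all tuples with `a_1 + ⋯ + a_d = c` equals the
minimum of `∑_j α_j (a_j)` over the same set of tuples. -/
theorem min_pnorm_eq_minsum_gf2
    (d : ℕ) (hd : 1 ≤ d) (p : ℝ) (hp : 1 ≤ p) (α : Fin d → ZMod 2 → ℝ)
    (hα : ∀ j a, 0 ≤ α j a) (hzero : ∀ j, ∃ s, α j s = 0) :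
    ∀ c : ZMod 2,
      sInf {x : ℝ | ∃ a : Fin d → ZMod 2, (∑ j, a j = c) ∧
          x = (∑ j, (α j (a j)) ^ p) ^ (1 / p)}
        = sInf {x : ℝ | ∃ a : Fin d → ZMod 2, (∑ j, a j = c) ∧ x = ∑ j, α j (a j)} := by
  have hp0 : p ≠ 0 := by linarith
  have hp0' : (0:ℝ) ≤ 1 / p := by positivity
  choose s hs using hzero
  have flip : ∀ x y : ZMod 2, x ≠ y → x = y + 1 := by decide
  intro c
  by_cases hcase : (∑ j, s j) = c
  · -- both minima are 0
    have hA0 : (0:ℝ) ∈ {x : ℝ | ∃ a : Fin d → ZMod 2, (∑ j, a j = c) ∧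
        x = (∑ j, (α j (a j)) ^ p) ^ (1 / p)} := by
      refine ⟨s, hcase, ?_⟩
      simp [hs, Real.zero_rpow hp0, Real.zero_rpow (inv_ne_zero hp0)]
    have hB0 : (0:ℝ) ∈ {x : ℝ | ∃ a : Fin d → ZMod 2, (∑ j, a j = c) ∧
        x = ∑ j, α j (a j)} := by
      refine ⟨s, hcase, ?_⟩
      simp [hs]
    have hAlb : ∀ x ∈ {x : ℝ | ∃ a : Fin d → ZMod 2, (∑ j, a j = c) ∧
        x = (∑ j, (α j (a j)) ^ p) ^ (1 / p)}, (0:ℝ) ≤ x := by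
      rintro x ⟨a, -, rfl⟩
      exact Real.rpow_nonneg
        (Finset.sum_nonneg fun j _ => Real.rpow_nonneg (hα j (a j)) p) _
    have hBlb : ∀ x ∈ {x : ℝ | ∃ a : Fin d → ZMod 2, (∑ j, a j = c) ∧
        x = ∑ j, α j (a j)}, (0:ℝ) ≤ x := by
      rintro x ⟨a, -, rfl⟩
      exact Finset.sum_nonneg fun j _ => hα j (a j)
    rw [le_antisymm (csInf_le ⟨0, hAlb⟩ hA0) (le_csInf ⟨0, hA0⟩ hAlb),
        le_antisymm (csInf_le ⟨0, hBlb⟩ hB0) (le_csInf ⟨0, hB0⟩ hBlb)]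
  · -- the minimum is the smallest value α k (s k + 1)
    haveI : Nonempty (Fin d) := ⟨⟨0, hd⟩⟩
    obtain ⟨k, -, hkmin⟩ := Finset.exists_min_image Finset.univ
      (fun k => α k (s k + 1)) Finset.univ_nonempty
    set m := α k (s k + 1) with hm
    have hm0 : 0 ≤ m := hα _ _
    -- the flipped tuple
    set a0 : Fin d → ZMod 2 := Function.update s k (s k + 1) with ha0
    have hsum0 : ∑ j, a0 j = c := by
      have ha0j : ∀ j, a0 j = s j + if j = k then 1 else 0 := by
        intro j; by_cases h : j = k
        · subst h; simp [ha0]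
        · simp [ha0, Function.update_of_ne h, h]
      rw [Finset.sum_congr rfl fun j _ => ha0j j, Finset.sum_add_distrib,
        Finset.sum_ite_eq' Finset.univ k (fun _ => (1 : ZMod 2))]
      simp only [Finset.mem_univ, if_true]
      have h11 : ∀ x : ZMod 2, x + 1 + 1 = x := by decide
      rw [flip _ _ hcase]; exact h11 c
    have hval : ∀ j, j ≠ k → α j (a0 j) = 0 := by
      intro j hj
      rw [ha0, Function.update_of_ne hj]
      exact hs j
    have hAm : m ∈ {x : ℝ | ∃ a : Fin d → ZMod 2, (∑ j, a j = c) ∧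
        x = (∑ j, (α j (a j)) ^ p) ^ (1 / p)} := by
      refine ⟨a0, hsum0, ?_⟩
      have : (∑ j, (α j (a0 j)) ^ p) = m ^ p := by
        rw [Finset.sum_eq_single k]
        · rw [ha0, Function.update_self]
        · intro j _ hj
          rw [hval j hj, Real.zero_rpow hp0]
        · intro h; exact absurd (Finset.mem_univ k) h
      rw [this, one_div, Real.rpow_rpow_inv hm0 hp0]
    have hBm : m ∈ {x : ℝ | ∃ a : Fin d → ZMod 2, (∑ j, a j = c) ∧
        x = ∑ j, α j (a j)} := by
      refine ⟨a0, hsum0, ?_⟩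
      rw [Finset.sum_eq_single k]
      · rw [ha0, Function.update_self]
      · intro j _ hj; exact hval j hj
      · intro h; exact absurd (Finset.mem_univ k) h
    have exdiff : ∀ a : Fin d → ZMod 2, (∑ j, a j = c) → ∃ i, a i = s i + 1 := by
      intro a ha
      by_contra h
      push_neg at h
      have : ∀ i, a i = s i := by
        intro i
        by_contra hi
        exact h i (flip _ _ hi)
      apply hcase
      rw [← ha]
      exact Finset.sum_congr rfl fun j _ => (this j).symm
    have hAlb : ∀ x ∈ {x : ℝ | ∃ a : Fin d → ZMod 2, (∑ j, a j = c) ∧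
        x = (∑ j, (α j (a j)) ^ p) ^ (1 / p)}, m ≤ x := by
      rintro x ⟨a, ha, rfl⟩
      obtain ⟨i, hi⟩ := exdiff a ha
      have h1 : (α i (a i)) ^ p ≤ ∑ j, (α j (a j)) ^ p :=
        Finset.single_le_sum (fun j _ => Real.rpow_nonneg (hα j (a j)) p)
          (Finset.mem_univ i)
      have h2 : ((α i (a i)) ^ p) ^ (1/p) ≤ (∑ j, (α j (a j)) ^ p) ^ (1/p) :=
        Real.rpow_le_rpow (Real.rpow_nonneg (hα i (a i)) p) h1 hp0'
      have h3 : ((α i (a i)) ^ p) ^ (1/p) = α i (a i) := by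
        rw [one_div, Real.rpow_rpow_inv (hα i (a i)) hp0]
      calc m ≤ α i (s i + 1) := hkmin i (Finset.mem_univ i)
        _ = α i (a i) := by rw [hi]
        _ = ((α i (a i)) ^ p) ^ (1/p) := h3.symm
        _ ≤ _ := h2
    have hBlb : ∀ x ∈ {x : ℝ | ∃ a : Fin d → ZMod 2, (∑ j, a j = c) ∧
        x = ∑ j, α j (a j)}, m ≤ x := by
      rintro x ⟨a, ha, rfl⟩
      obtain ⟨i, hi⟩ := exdiff a ha
      have h1 : α i (a i) ≤ ∑ j, α j (a j) :=
        Finset.single_le_sum (fun j _ => hα j (a j)) (Finset.mem_univ i)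
      calc m ≤ α i (s i + 1) := hkmin i (Finset.mem_univ i)
        _ = α i (a i) := by rw [hi]
        _ ≤ _ := h1
    rw [le_antisymm (csInf_le ⟨m, hAlb⟩ hAm) (le_csInf ⟨m, hAm⟩ hAlb),
        le_antisymm (csInf_le ⟨m, hBlb⟩ hBm) (le_csInf ⟨m, hBm⟩ hBlb)]
end
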